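/- For the symmetric random walk started from x_N = ⌊αN⌋ with 0 < α < 1, the scaled range R_N/N converges in distribution as N → ∞; explicitly, for every β with 0 < β ≤ 1, the probability P_{⌊αN⌋}(R_N ≥ βN) converges to: 1 if β ≤ min(α,1−α); min(α,1−α)/β if min(α,1−α) < β < max(α,1−α); and (1−β)/β if max(α,1−α) ≤ β ≤ 1. -/

import Mathlib

open Filter Topology

/-- Position of the nearest-neighbor walk after the steps `w` (`true` = one step right,
`false` = one step left), started from `x`. -/
def walkPos (x : ℤ) (w : List Bool) : ℤ :=
  x + (w.count true : ℤ) - (w.count false : ℤ)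

/-- `w` is the step sequence of a trajectory on `{0, 1, …, N}` started at `x` and run
exactly until the exit time `τ_N = T_0 ∧ T_N`: all positions strictly before the last
step lie strictly inside `(0, N)`, and the final position is `0` or `N`. -/
def IsExitPath (N : ℕ) (x : ℤ) (w : List Bool) : Prop :=
  (∀ k < w.length, 0 < walkPos x (w.take k) ∧ walkPos x (w.take k) < (N : ℤ)) ∧
    (walkPos x w = 0 ∨ walkPos x w = (N : ℤ))

/-- Probability weight of the step sequence `w` when each step goes right with
probability `p` and left with probability `1 - p`, independently. -/
noncomputable def wt (p : ℝ) (w : List Bool) : ℝ :=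
  p ^ w.count true * (1 - p) ^ w.count false

/-- `prob N p x S` is the probability, for the walk on `{0, …, N}` with right-step
probability `p` started at `x` and stopped at the exit time `τ_N`, that its stopped
trajectory (recorded as the step sequence up to time `τ_N`) satisfies `S`. -/
noncomputable def prob (N : ℕ) (p : ℝ) (x : ℤ) (S : List Bool → Prop) : ℝ :=
  ∑' w : List Bool, Set.indicator {w | IsExitPath N x w ∧ S w} (wt p) w

/-- Expectation of `f` of the stopped trajectory for the walk started at `x`. -/
noncomputable def expect (N : ℕ) (p : ℝ) (x : ℤ) (f : List Bool → ℝ) : ℝ :=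
  ∑' w : List Bool, Set.indicator {w | IsExitPath N x w} (fun w => wt p w * f w) w

/-- Probability for the walk whose starting point is uniformly distributed on
`{0, 1, …, N}`; the event `S` may depend on the starting point. -/
noncomputable def probUniform (N : ℕ) (p : ℝ) (S : ℤ → List Bool → Prop) : ℝ :=
  (∑ x ∈ Finset.range (N + 1), prob N p (x : ℤ) (S (x : ℤ))) / (N + 1)

/-- The set of sites visited by the stopped walk up to time `τ_N` (time `0` included). -/
def rangeSet (x : ℤ) (w : List Bool) : Finset ℤ :=
  (Finset.range (w.length + 1)).image fun k => walkPos x (w.take k)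

/-- The range `R_N`: the number of distinct sites visited up to the exit time. -/
def rangeCount (x : ℤ) (w : List Bool) : ℕ := (rangeSet x w).card

/-- The local time `G(y) = Σ_{k=0}^{τ_N} 1_{X_k = y}` of the stopped trajectory `w`. -/
def localTime (x y : ℤ) (w : List Bool) : ℕ :=
  ((Finset.range (w.length + 1)).filter fun k => walkPos x (w.take k) = y).card

/-- The event `T_y < τ_N`: the walk started at `x` visits `y` at some time
`k ≥ 1` strictly before the end of the stopped trajectory `w`. -/
def hitsBefore (x y : ℤ) (w : List Bool) : Prop :=
  ∃ k, 1 ≤ k ∧ k < w.length ∧ walkPos x (w.take k) = y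

/-!
The range of a path stopped on leaving `(0, N)` is an interval containing its exit point, so
`R_N ≥ b + 1` means: exit at `0` after visiting `b`, or exit at `N` after visiting `N - b`.
Splitting at the first visit to `b` (strong Markov property) and using the gambler's-ruin
probabilities `P_x(X_τ = N) = x / N`, the first event has probability `min(1, x/b) - x/N`; by the
reflection `x ↦ N - x` the second has probability `min(1, (N-x)/b) - (N-x)/N`. Hence
`P_x(R_N ≥ b + 1) = min(1, x/b) + min(1, (N-x)/b) - 1`, which for `x = ⌊αN⌋`, `b ≈ βN` tends to
`min(1, α/β) + min(1, (1-α)/β) - 1`; the three regimes are the three ways the minima resolve.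
-/
@[simp] lemma walkPos_nil (x : ℤ) : walkPos x [] = x := by simp [walkPos]

lemma walkPos_append (x : ℤ) (u v : List Bool) :
    walkPos x (u ++ v) = walkPos (walkPos x u) v := by
  simp only [walkPos, List.count_append]; push_cast; ring

lemma walkPos_cons (x : ℤ) (b : Bool) (w : List Bool) :
    walkPos x (b :: w) = walkPos (x + if b then 1 else -1) w := by
  cases b <;> simp [walkPos] <;> ring

lemma walkPos_map_not (c x : ℤ) (w : List Bool) :
    walkPos (c - x) (w.map not) = c - walkPos x w := by
  induction w generalizing x with
  | nil => simp
  | cons b w ih =>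
    rw [List.map_cons, walkPos_cons, walkPos_cons, ← ih]
    cases b <;> simp <;> ring_nf

lemma abs_walkPos_take_succ_sub_le (x : ℤ) (w : List Bool) (k : ℕ) :
    |walkPos x (w.take (k + 1)) - walkPos x (w.take k)| ≤ 1 := by
  rw [List.take_add_one, walkPos_append]
  rcases w[k]? with _ | b
  · simp
  · cases b <;> simp [walkPos]

lemma exists_eq_of_abs_sub_le_one {f : ℕ → ℤ} (hf : ∀ k, |f (k + 1) - f k| ≤ 1)
    {a c : ℕ} (hac : a ≤ c) {y : ℤ} (hy : y ∈ Set.uIcc (f a) (f c)) :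
    ∃ k ∈ Set.Icc a c, f k = y := by
  have up : ∀ g : ℕ → ℤ, (∀ k, |g (k + 1) - g k| ≤ 1) → ∀ y, g a ≤ y → y ≤ g c →
      ∃ k ∈ Set.Icc a c, g k = y := by
    clear hy hf
    intro g hg y ha
    induction c, hac using Nat.le_induction with
    | base => exact fun hc => ⟨a, ⟨le_rfl, le_rfl⟩, le_antisymm ha hc⟩
    | succ c hac ih =>
      intro hc
      by_cases hyc : y ≤ g c
      · obtain ⟨k, hk, hky⟩ := ih hyc
        exact ⟨k, ⟨hk.1, hk.2.trans c.le_succ⟩, hky⟩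
      · have := abs_le.mp (hg c)
        exact ⟨c + 1, ⟨hac.trans c.le_succ, le_rfl⟩, by omega⟩
  rcases Set.mem_uIcc.mp hy with ⟨ha, hc⟩ | ⟨hc, ha⟩
  · exact up f hf y ha hc
  · have hf' : ∀ k, |-f (k + 1) - -f k| ≤ 1 := fun k => by
      rw [← abs_neg, neg_sub, sub_neg_eq_add, neg_add_eq_sub]; exact hf k
    obtain ⟨k, hk, hky⟩ := up (fun k => -f k) hf' (-y) (neg_le_neg ha) (neg_le_neg hc)
    exact ⟨k, hk, neg_inj.mp hky⟩

lemma isExitPath_append_iff {N : ℕ} {x : ℤ} {u v : List Bool}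
    (hu : ∀ k < u.length, 0 < walkPos x (u.take k) ∧ walkPos x (u.take k) < N) :
    IsExitPath N x (u ++ v) ↔ IsExitPath N (walkPos x u) v := by
  have inside_iff : (∀ k < (u ++ v).length,
        0 < walkPos x ((u ++ v).take k) ∧ walkPos x ((u ++ v).take k) < N) ↔
      ∀ j < v.length, 0 < walkPos (walkPos x u) (v.take j) ∧
        walkPos (walkPos x u) (v.take j) < N := by
    refine ⟨fun h j hj => ?_, fun h k hk => ?_⟩
    · simpa [List.take_length_add_append, walkPos_append] using
        h (u.length + j) (by simp; omega)
    · rcases lt_or_ge k u.length with hk' | hk'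
      · rw [List.take_append_of_le_length hk'.le]; exact hu k hk'
      · obtain ⟨j, rfl⟩ := Nat.exists_eq_add_of_le hk'
        rw [List.take_length_add_append, walkPos_append]
        exact h j (by simp at hk; omega)
  rw [IsExitPath, IsExitPath, inside_iff, walkPos_append]

lemma isExitPath_cons_iff {N : ℕ} {x : ℤ} (hx0 : 0 < x) (hxN : x < N) (b : Bool)
    (w : List Bool) :
    IsExitPath N x (b :: w) ↔ IsExitPath N (x + if b then 1 else -1) w := by
  have h := isExitPath_append_iff (N := N) (x := x) (u := [b]) (v := w)
    (fun k hk => by simp at hk; subst hk; simpa using ⟨hx0, hxN⟩)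
  rwa [walkPos_cons, walkPos_nil] at h

lemma isExitPath_iff_eq_nil {N : ℕ} {x : ℤ} (hx : x = 0 ∨ x = N) {w : List Bool} :
    IsExitPath N x w ↔ w = [] := by
  constructor
  · intro hw
    by_contra hne
    have := hw.1 0 (List.length_pos_iff.mpr hne)
    simp only [List.take_zero, walkPos_nil] at this
    omega
  · rintro rfl
    exact ⟨by simp, by simpa using hx⟩

lemma isExitPath_map_not {N : ℕ} {x : ℤ} {w : List Bool} :
    IsExitPath N (N - x) (w.map not) ↔ IsExitPath N x w := by
  simp only [IsExitPath, List.length_map, ← List.map_take, walkPos_map_not]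
  constructor <;> rintro ⟨hin, hend⟩ <;> exact ⟨fun k hk => by have := hin k hk; omega, by omega⟩

def PrefixFree {α : Type*} (S : Set (List α)) : Prop :=
  ∀ u ∈ S, ∀ v, u ++ v ∈ S → v = []

lemma prefixFree_isExitPath (N : ℕ) (x : ℤ) : PrefixFree {w | IsExitPath N x w} := by
  intro u hu v huv
  by_contra hv
  have h := huv.1 u.length (by simpa using List.length_pos_iff.mpr hv)
  rw [List.take_append_length] at h
  rcases hu.2 with h' | h' <;> omega

open scoped ENNReal

noncomputable def coinWeight (w : List Bool) : ℝ≥0∞ := 2⁻¹ ^ w.length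

lemma coinWeight_append (u v : List Bool) :
    coinWeight (u ++ v) = coinWeight u * coinWeight v := by
  simp [coinWeight, pow_add]

noncomputable def mass (S : Set (List Bool)) : ℝ≥0∞ := ∑' w : S, coinWeight w

lemma mass_eq_tsum_indicator (S : Set (List Bool)) :
    mass S = ∑' w, S.indicator coinWeight w :=
  tsum_subtype S coinWeight

lemma mass_mono {S T : Set (List Bool)} (h : S ⊆ T) : mass S ≤ mass T :=
  ENNReal.tsum_mono_subtype coinWeight h

lemma mass_union_le (S T : Set (List Bool)) : mass (S ∪ T) ≤ mass S + mass T :=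
  ENNReal.tsum_union_le coinWeight S T

lemma mass_union {S T : Set (List Bool)} (h : Disjoint S T) : mass (S ∪ T) = mass S + mass T :=
  ENNReal.summable.tsum_union_disjoint (f := coinWeight) h ENNReal.summable

@[simp] lemma mass_empty : mass ∅ = 0 := tsum_empty

@[simp] lemma mass_singleton (w : List Bool) : mass {w} = coinWeight w :=
  tsum_singleton w coinWeight

lemma mass_image2_append {A : Set (List Bool)} (hA : PrefixFree A) (B : Set (List Bool)) :
    mass (Set.image2 (· ++ ·) A B) = mass A * mass B := by
  have hinj : Set.InjOn (fun p : List Bool × List Bool => p.1 ++ p.2) (A ×ˢ B) := by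
    rintro ⟨u, v⟩ ⟨hu, -⟩ ⟨u', v'⟩ ⟨hu', -⟩ h
    rcases List.append_eq_append_iff.mp h with ⟨a, rfl, hv⟩ | ⟨c, rfl, hv'⟩
    · simp_all [hA u hu a hu']
    · simp_all [hA u' hu' c hu]
  rw [mass, ← Set.image_prod, tsum_image coinWeight hinj,
    ← (Equiv.Set.prod A B).symm.tsum_eq, ENNReal.tsum_prod', mass, mass,
    ← ENNReal.tsum_mul_right]
  refine tsum_congr fun u => ?_
  rw [← ENNReal.tsum_mul_left]
  exact tsum_congr fun v => coinWeight_append u v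

lemma mass_image_cons (b : Bool) (T : Set (List Bool)) :
    mass ((b :: ·) '' T) = 2⁻¹ * mass T := by
  have hb : PrefixFree ({[b]} : Set (List Bool)) := by
    rintro u rfl v hv
    simpa using hv
  have hT : (b :: ·) '' T = Set.image2 (· ++ ·) {[b]} T := by
    rw [Set.image2_singleton_left]; rfl
  rw [hT, mass_image2_append hb, mass_singleton, coinWeight, List.length_singleton, pow_one]

lemma PrefixFree.tail {α : Type*} {S : Set (List α)} (hS : PrefixFree S) (b : α) :
    PrefixFree {w | b :: w ∈ S} :=
  fun u hu v huv => hS (b :: u) hu v huv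

lemma mass_le_one_of_prefixFree {S : Set (List Bool)} (hS : PrefixFree S) : mass S ≤ 1 := by
  have bounded : ∀ n, ∀ S : Set (List Bool), PrefixFree S →
      mass {w ∈ S | w.length ≤ n} ≤ 1 := by
    intro n
    induction n with
    | zero =>
      intro S _
      calc mass {w ∈ S | w.length ≤ 0} ≤ mass {[]} :=
            mass_mono fun w hw => by simpa using hw.2
        _ = 1 := by simp [coinWeight]
    | succ n ih =>
      intro S hS
      by_cases hnil : [] ∈ S
      · calc mass {w ∈ S | w.length ≤ n + 1} ≤ mass {[]} :=
              mass_mono fun w hw => hS [] hnil w hw.1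
          _ = 1 := by simp [coinWeight]
      have hsplit : {w ∈ S | w.length ≤ n + 1} ⊆
          (true :: ·) '' {w ∈ {w | true :: w ∈ S} | w.length ≤ n} ∪
            (false :: ·) '' {w ∈ {w | false :: w ∈ S} | w.length ≤ n} := by
        rintro (_ | ⟨b, w⟩) ⟨hw, hlen⟩
        · exact absurd hw hnil
        · cases b
          · exact Or.inr ⟨w, ⟨hw, by simpa using hlen⟩, rfl⟩
          · exact Or.inl ⟨w, ⟨hw, by simpa using hlen⟩, rfl⟩
      calc mass {w ∈ S | w.length ≤ n + 1}
          ≤ 2⁻¹ * mass {w ∈ {w | true :: w ∈ S} | w.length ≤ n} +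
              2⁻¹ * mass {w ∈ {w | false :: w ∈ S} | w.length ≤ n} := by
            rw [← mass_image_cons, ← mass_image_cons]
            exact (mass_mono hsplit).trans (mass_union_le _ _)
        _ ≤ 2⁻¹ * 1 + 2⁻¹ * 1 := by
            gcongr
            exacts [ih _ (hS.tail true), ih _ (hS.tail false)]
        _ = 1 := by rw [mul_one, ENNReal.inv_two_add_inv_two]
  rw [mass_eq_tsum_indicator, ENNReal.tsum_eq_iSup_sum]
  refine iSup_le fun F => ?_
  calc ∑ w ∈ F, S.indicator coinWeight w
      = ∑ w ∈ F, {w ∈ S | w.length ≤ F.sup List.length}.indicator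
          coinWeight w := by
        refine Finset.sum_congr rfl fun w hw => ?_
        have hlen : w.length ≤ F.sup List.length := Finset.le_sup (f := List.length) hw
        by_cases hwS : w ∈ S <;> simp [Set.indicator, hwS, hlen]
    _ ≤ mass {w ∈ S | w.length ≤ F.sup List.length} := by
        rw [mass_eq_tsum_indicator]; exact ENNReal.sum_le_tsum F
    _ ≤ 1 := bounded _ S hS

lemma mass_preimage_map_not (S : Set (List Bool)) :
    mass (List.map not ⁻¹' S) = mass S := by
  have hinv : Function.Involutive (List.map not) := fun w => by simp [Function.comp_def]
  rw [mass_eq_tsum_indicator, mass_eq_tsum_indicator, ← (hinv.toPerm _).tsum_eq]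
  refine tsum_congr fun w => ?_
  classical
  rw [Function.Involutive.coe_toPerm, Set.indicator_apply, Set.indicator_apply,
    Set.mem_preimage, hinv w, coinWeight, coinWeight, List.length_map]

noncomputable def symProb (N : ℕ) (x : ℤ) (S : Set (List Bool)) : ℝ≥0∞ :=
  mass {w | IsExitPath N x w ∧ w ∈ S}

lemma symProb_le_one (N : ℕ) (x : ℤ) (S : Set (List Bool)) : symProb N x S ≤ 1 :=
  (mass_mono fun _ hw => hw.1).trans (mass_le_one_of_prefixFree (prefixFree_isExitPath N x))

lemma symProb_ne_top (N : ℕ) (x : ℤ) (S : Set (List Bool)) : symProb N x S ≠ ⊤ :=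
  ne_top_of_le_ne_top ENNReal.one_ne_top (symProb_le_one N x S)

lemma prob_half_eq_toReal_symProb (N : ℕ) (x : ℤ) (S : List Bool → Prop) :
    prob N (1 / 2) x S = (symProb N x {w | S w}).toReal := by
  classical
  have hwt : ∀ w, wt (1 / 2) w = (coinWeight w).toReal := fun w => by
    rw [wt, coinWeight, ENNReal.toReal_pow, ENNReal.toReal_inv, ENNReal.toReal_ofNat,
      ← List.count_true_add_count_false w, pow_add]
    norm_num
  rw [symProb, mass_eq_tsum_indicator, ENNReal.tsum_toReal_eq fun w => ?_]
  · refine tsum_congr fun w => ?_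
    by_cases h : IsExitPath N x w ∧ S w <;>
      simp only [Set.indicator_apply, Set.mem_ofPred_eq, h, and_self, if_true, if_false, hwt,
        ENNReal.toReal_zero]
  · simp only [Set.indicator_apply]
    split_ifs <;> simp [coinWeight]

lemma symProb_congr {N : ℕ} {x : ℤ} {S T : Set (List Bool)}
    (h : ∀ w, IsExitPath N x w → (w ∈ S ↔ w ∈ T)) : symProb N x S = symProb N x T := by
  rw [symProb, symProb]
  congr 1
  ext w
  exact ⟨fun hw => ⟨hw.1, (h w hw.1).mp hw.2⟩, fun hw => ⟨hw.1, (h w hw.1).mpr hw.2⟩⟩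

lemma symProb_union {N : ℕ} {x : ℤ} {S T : Set (List Bool)} (h : Disjoint S T) :
    symProb N x (S ∪ T) = symProb N x S + symProb N x T := by
  rw [symProb, symProb, symProb, ← mass_union]
  · congr 1; ext w; simp [and_or_left]
  · exact Set.disjoint_left.mpr fun w hS hT => Set.disjoint_left.mp h hS.2 hT.2

lemma symProb_eq_of_mem_Ioo {N : ℕ} {x : ℤ} (hx0 : 0 < x) (hxN : x < N) (S : Set (List Bool)) :
    symProb N x S = 2⁻¹ * symProb N (x + 1) {w | true :: w ∈ S} +
      2⁻¹ * symProb N (x - 1) {w | false :: w ∈ S} := by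
  have hsplit : {w | IsExitPath N x w ∧ w ∈ S} =
      (true :: ·) '' {w | IsExitPath N (x + 1) w ∧ w ∈ {w | true :: w ∈ S}} ∪
        (false :: ·) '' {w | IsExitPath N (x - 1) w ∧ w ∈ {w | false :: w ∈ S}} := by
    ext (_ | ⟨b, w⟩)
    · refine iff_of_false (fun h => ?_) (by simp)
      rcases h.1.2 with h | h <;> simp at h <;> omega
    · cases b <;> simp [isExitPath_cons_iff hx0 hxN, sub_eq_add_neg]
  rw [symProb, hsplit, mass_union, mass_image_cons, mass_image_cons, symProb, symProb]
  exact Set.disjoint_left.mpr fun w ⟨_, _, h⟩ ⟨_, _, h'⟩ => by simp [← h] at h'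

open scoped Classical in
lemma symProb_of_boundary {N : ℕ} {x : ℤ} (hx : x = 0 ∨ x = N) (S : Set (List Bool)) :
    symProb N x S = if [] ∈ S then 1 else 0 := by
  have hset : {w | IsExitPath N x w ∧ w ∈ S} = if [] ∈ S then {[]} else ∅ := by
    ext w
    split_ifs with h <;> simp [isExitPath_iff_eq_nil hx] <;> rintro rfl <;> trivial
  rw [symProb, hset]
  split_ifs <;> simp [coinWeight]

lemma symProb_map_not (N : ℕ) (x : ℤ) (S : Set (List Bool)) :
    symProb N x S = symProb N (N - x) {w | w.map not ∈ S} := by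
  rw [symProb, symProb, ← mass_preimage_map_not]
  congr 1
  ext w
  have h := isExitPath_map_not (N := N) (x := N - x) (w := w)
  rw [sub_sub_cancel] at h
  simp [h]

lemma mul_eq_of_forall_eq_midpoint {f : ℤ → ℝ} {N : ℤ}
    (hf : ∀ x, 0 < x → x < N → f x = (f (x + 1) + f (x - 1)) / 2)
    {x : ℤ} (hx0 : 0 ≤ x) (hxN : x ≤ N) :
    N * f x = (N - x) * f 0 + x * f N := by
  have step : ∀ y, 0 ≤ y → y < N → f (y + 1) - f y = f 1 - f 0 := by
    intro y hy
    induction y, hy using Int.leInduction with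
    | base => simp
    | succ y hy ih =>
      intro hyN
      have := hf (y + 1) (by omega) hyN
      rw [add_sub_cancel_right] at this
      linarith [ih (by omega)]
  have affine : ∀ y, 0 ≤ y → y ≤ N → f y = f 0 + y * (f 1 - f 0) := by
    intro y hy
    induction y, hy using Int.leInduction with
    | base => simp
    | succ y hy ih =>
      intro hyN
      push_cast
      linarith [ih (by omega), step y hy (by omega)]
  rw [affine x hx0 hxN, affine N (hx0.trans hxN) le_rfl]
  ring

noncomputable def exitProb (N : ℕ) (y x : ℤ) : ℝ := (symProb N x {w | walkPos x w = y}).toReal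

lemma exitProb_eq_midpoint {N : ℕ} (y : ℤ) {x : ℤ} (hx0 : 0 < x) (hxN : x < N) :
    exitProb N y x = (exitProb N y (x + 1) + exitProb N y (x - 1)) / 2 := by
  rw [exitProb, symProb_eq_of_mem_Ioo hx0 hxN, ENNReal.toReal_add, ENNReal.toReal_mul,
    ENNReal.toReal_mul, ENNReal.toReal_inv, ENNReal.toReal_ofNat]
  · simp only [Set.mem_ofPred_eq, walkPos_cons, if_true, Bool.false_eq_true, if_false,
      ← sub_eq_add_neg]
    rw [exitProb, exitProb]
    ring
  all_goals exact ENNReal.mul_ne_top (by simp) (symProb_ne_top _ _ _)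

lemma exitProb_of_boundary {N : ℕ} (y : ℤ) {x : ℤ} (hx : x = 0 ∨ x = N) :
    exitProb N y x = if x = y then 1 else 0 := by
  rw [exitProb, symProb_of_boundary hx]
  split_ifs <;> simp_all

lemma exitProb_right {N : ℕ} (hN : 0 < N) {x : ℤ} (hx0 : 0 ≤ x) (hxN : x ≤ N) :
    exitProb N N x = x / N := by
  have h := mul_eq_of_forall_eq_midpoint (fun y => exitProb_eq_midpoint (N := N) N) hx0 hxN
  rw [exitProb_of_boundary _ (Or.inl rfl), exitProb_of_boundary _ (Or.inr rfl)] at h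
  have hN' : (0 : ℝ) < N := by exact_mod_cast hN
  rw [eq_div_iff hN'.ne']
  simp only [Int.cast_natCast, if_pos, if_neg (by omega : (0 : ℤ) ≠ N)] at h
  linarith

lemma exitProb_zero {N : ℕ} (hN : 0 < N) {x : ℤ} (hx0 : 0 ≤ x) (hxN : x ≤ N) :
    exitProb N 0 x = 1 - x / N := by
  have h := mul_eq_of_forall_eq_midpoint (fun y => exitProb_eq_midpoint (N := N) 0) hx0 hxN
  rw [exitProb_of_boundary _ (Or.inl rfl), exitProb_of_boundary _ (Or.inr rfl)] at h
  have hN' : (0 : ℝ) < N := by exact_mod_cast hN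
  field_simp
  simp only [Int.cast_natCast, if_pos, if_neg (by omega : (N : ℤ) ≠ 0)] at h
  linarith

lemma mem_rangeSet {x y : ℤ} {w : List Bool} :
    y ∈ rangeSet x w ↔ ∃ k ≤ w.length, walkPos x (w.take k) = y := by
  simp [rangeSet]

lemma start_mem_rangeSet (x : ℤ) (w : List Bool) : x ∈ rangeSet x w :=
  mem_rangeSet.mpr ⟨0, Nat.zero_le _, by simp⟩

lemma walkPos_mem_rangeSet (x : ℤ) (w : List Bool) : walkPos x w ∈ rangeSet x w :=
  mem_rangeSet.mpr ⟨w.length, le_rfl, by rw [List.take_length]⟩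

lemma mem_rangeSet_map_not {c x y : ℤ} {w : List Bool} :
    y ∈ rangeSet (c - x) (w.map not) ↔ c - y ∈ rangeSet x w := by
  simp only [mem_rangeSet, List.length_map, ← List.map_take, walkPos_map_not]
  exact exists_congr fun k => and_congr_right fun _ => by omega

lemma rangeSet_eq_Icc (x : ℤ) (w : List Bool) :
    rangeSet x w = Finset.Icc ((rangeSet x w).min' ⟨x, start_mem_rangeSet x w⟩)
      ((rangeSet x w).max' ⟨x, start_mem_rangeSet x w⟩) := by
  have hne : (rangeSet x w).Nonempty := ⟨x, start_mem_rangeSet x w⟩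
  refine Finset.Subset.antisymm (fun y hy => Finset.mem_Icc.mpr
    ⟨Finset.min'_le _ y hy, Finset.le_max' _ y hy⟩) fun y hy => ?_
  obtain ⟨i, hi, hiy⟩ := mem_rangeSet.mp ((rangeSet x w).min'_mem hne)
  obtain ⟨j, hj, hjy⟩ := mem_rangeSet.mp ((rangeSet x w).max'_mem hne)
  rw [Finset.mem_Icc, ← hiy, ← hjy] at hy
  have hy' : y ∈ Set.uIcc (walkPos x (w.take (min i j))) (walkPos x (w.take (max i j))) := by
    rcases le_total i j with h | h
    · rw [min_eq_left h, max_eq_right h]; exact Set.mem_uIcc.mpr (Or.inl hy)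
    · rw [min_eq_right h, max_eq_left h]; exact Set.mem_uIcc.mpr (Or.inr hy)
  obtain ⟨k, hk, hky⟩ := exists_eq_of_abs_sub_le_one (f := fun k => walkPos x (w.take k))
    (abs_walkPos_take_succ_sub_le x w) min_le_max hy'
  exact mem_rangeSet.mpr ⟨k, hk.2.trans (max_le hi hj), hky⟩

lemma mem_Icc_of_mem_rangeSet {N : ℕ} {x y : ℤ} {w : List Bool} (hw : IsExitPath N x w)
    (hy : y ∈ rangeSet x w) : 0 ≤ y ∧ y ≤ N := by
  obtain ⟨k, hk, rfl⟩ := mem_rangeSet.mp hy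
  rcases hk.lt_or_eq with hk | rfl
  · have := hw.1 k hk; omega
  · rw [List.take_length]; rcases hw.2 with h | h <;> omega

/-- The range is an interval containing the exit point. -/
lemma le_rangeCount_iff {N : ℕ} (hN : 0 < N) {x : ℤ} {w : List Bool} (hw : IsExitPath N x w)
    (b : ℕ) :
    b + 1 ≤ rangeCount x w ↔ (walkPos x w = 0 ∧ (b : ℤ) ∈ rangeSet x w) ∨
      (walkPos x w = N ∧ (N : ℤ) - b ∈ rangeSet x w) := by
  have hne : (rangeSet x w).Nonempty := ⟨x, start_mem_rangeSet x w⟩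
  have hm := mem_Icc_of_mem_rangeSet hw (Finset.min'_mem _ hne)
  have hM := mem_Icc_of_mem_rangeSet hw (Finset.max'_mem _ hne)
  have hend := walkPos_mem_rangeSet x w
  rw [rangeSet_eq_Icc, Finset.mem_Icc] at hend
  rw [rangeCount, ← Nat.cast_le (α := ℤ), rangeSet_eq_Icc, Int.card_Icc, Finset.mem_Icc,
    Finset.mem_Icc]
  rcases hw.2 with h | h <;> rw [h] at hend ⊢ <;> omega

lemma PrefixFree.mono {α : Type*} {S T : Set (List α)} (hT : PrefixFree T) (h : S ⊆ T) :
    PrefixFree S :=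
  fun u hu v huv => hT u (h hu) v (h huv)

/-- Strong Markov property: split the path at its first visit to `b`. -/
lemma exitZero_visit_eq_image2_append {N b : ℕ} {x : ℤ} (hxb : x < b) (hbN : b < N) :
    {w | IsExitPath N x w ∧ w ∈ {w | walkPos x w = 0 ∧ (b : ℤ) ∈ rangeSet x w}} =
      Set.image2 (· ++ ·) {u | IsExitPath b x u ∧ u ∈ {u | walkPos x u = b}}
        {v | IsExitPath N b v ∧ v ∈ {v | walkPos b v = 0}} := by
  ext w
  constructor
  · rintro ⟨hw, hend, hb⟩
    classical
    have hvisit := mem_rangeSet.mp hb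
    set k := Nat.find hvisit
    obtain ⟨hk, hkb⟩ : k ≤ w.length ∧ walkPos x (w.take k) = b := Nat.find_spec hvisit
    have below : ∀ j < k, walkPos x (w.take j) < b := by
      intro j hj
      by_contra! hbj
      obtain ⟨i, hi, hib⟩ := exists_eq_of_abs_sub_le_one (f := fun k => walkPos x (w.take k))
        (abs_walkPos_take_succ_sub_le x w) (Nat.zero_le j)
        (Set.mem_uIcc.mpr (Or.inl ⟨by simpa using hxb.le, hbj⟩))
      exact Nat.find_min hvisit (hi.2.trans_lt hj) ⟨by have := hi.2; omega, hib⟩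
    have inside : ∀ j < (w.take k).length,
        0 < walkPos x ((w.take k).take j) ∧ walkPos x ((w.take k).take j) < N := by
      intro j hj
      rw [List.length_take] at hj
      rw [List.take_take, min_eq_left (by omega)]
      exact hw.1 j (by omega)
    refine ⟨w.take k, ⟨⟨fun j hj => ⟨(inside j hj).1, ?_⟩, Or.inr hkb⟩, hkb⟩, w.drop k, ?_,
      List.take_append_drop k w⟩
    · rw [List.length_take] at hj
      rw [List.take_take, min_eq_left (by omega)]
      exact below j (by omega)
    · rw [← List.take_append_drop k w, isExitPath_append_iff inside, hkb] at hw
      refine ⟨hw, ?_⟩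
      show walkPos _ _ = 0
      rw [← hkb, ← walkPos_append, List.take_append_drop, hend]
  · rintro ⟨u, ⟨hu, hub : walkPos x u = b⟩, v, ⟨hv, hv0 : walkPos b v = 0⟩, rfl⟩
    have inside : ∀ j < u.length, 0 < walkPos x (u.take j) ∧ walkPos x (u.take j) < N :=
      fun j hj => ⟨(hu.1 j hj).1, (hu.1 j hj).2.trans (by exact_mod_cast hbN)⟩
    refine ⟨(isExitPath_append_iff inside).mpr (by rwa [hub]), ?_, ?_⟩
    · show walkPos x (u ++ v) = 0
      rw [walkPos_append, hub, hv0]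
    · exact mem_rangeSet.mpr ⟨u.length, by simp, by rw [List.take_append_length, hub]⟩

lemma toReal_symProb_exitZero_visit {N b : ℕ} {x : ℤ} (hx0 : 0 < x) (hxN : x < N)
    (hb0 : 0 < b) (hbN : b < N) :
    (symProb N x {w | walkPos x w = 0 ∧ (b : ℤ) ∈ rangeSet x w}).toReal =
      min 1 ((x : ℝ) / b) - x / N := by
  have hN : 0 < N := by omega
  have hbR : (0 : ℝ) < b := by exact_mod_cast hb0
  rcases le_or_gt (b : ℤ) x with hbx | hxb
  · have hvisit : ∀ w, IsExitPath N x w →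
        (w ∈ {w | walkPos x w = 0 ∧ (b : ℤ) ∈ rangeSet x w} ↔ w ∈ {w | walkPos x w = 0}) := by
      intro w _
      refine ⟨And.left, fun (hend : walkPos x w = 0) => ⟨hend, ?_⟩⟩
      have h0 := walkPos_mem_rangeSet x w
      have hx := start_mem_rangeSet x w
      rw [rangeSet_eq_Icc, Finset.mem_Icc] at h0 hx ⊢
      omega
    rw [symProb_congr hvisit, ← exitProb, exitProb_zero hN hx0.le hxN.le,
      min_eq_left ((one_le_div hbR).mpr (by exact_mod_cast hbx))]
  · rw [symProb, exitZero_visit_eq_image2_append hxb (by exact_mod_cast hbN),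
      mass_image2_append ((prefixFree_isExitPath b x).mono fun _ hu => hu.1),
      ENNReal.toReal_mul, ← symProb, ← symProb, ← exitProb, ← exitProb,
      exitProb_right hb0 hx0.le hxb.le, exitProb_zero hN (by positivity) (by exact_mod_cast hbN.le),
      min_eq_right ((div_le_one hbR).mpr (by exact_mod_cast hxb.le))]
    have : (N : ℝ) ≠ 0 := by positivity
    field_simp
    push_cast
    ring

lemma toReal_symProb_le_rangeCount {N b : ℕ} {x : ℤ} (hx0 : 0 < x) (hxN : x < N)
    (hb0 : 0 < b) (hbN : b < N) :
    (symProb N x {w | b + 1 ≤ rangeCount x w}).toReal =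
      min 1 ((x : ℝ) / b) + min 1 ((N - x : ℝ) / b) - 1 := by
  have hN : 0 < N := by omega
  have hsplit := symProb_congr (S := {w | b + 1 ≤ rangeCount x w})
    (T := {w | walkPos x w = 0 ∧ (b : ℤ) ∈ rangeSet x w} ∪
      {w | walkPos x w = N ∧ (N : ℤ) - b ∈ rangeSet x w})
    fun w hw => le_rangeCount_iff hN hw b
  have hreflect : symProb N x {w | walkPos x w = N ∧ (N : ℤ) - b ∈ rangeSet x w} =
      symProb N (N - x) {w | walkPos (N - x) w = 0 ∧ (b : ℤ) ∈ rangeSet (N - x) w} := by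
    rw [symProb_map_not]
    congr 1
    ext w
    have hx : x = N - (N - x) := by ring
    simp only [Set.mem_ofPred_eq]
    rw [hx, walkPos_map_not, mem_rangeSet_map_not, ← hx, sub_sub_cancel]
    constructor <;> rintro ⟨h, h'⟩ <;> exact ⟨by omega, h'⟩
  rw [hsplit, symProb_union, ENNReal.toReal_add (symProb_ne_top _ _ _) (symProb_ne_top _ _ _),
    hreflect, toReal_symProb_exitZero_visit hx0 hxN hb0 hbN,
    toReal_symProb_exitZero_visit (by omega) (by omega) hb0 hbN]
  · have : (N : ℝ) ≠ 0 := by positivity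
    push_cast
    field_simp
    ring
  · exact Set.disjoint_left.mpr fun w h h' => by have := h.1.symm.trans h'.1; omega

lemma tendsto_intFloor_mul_div {α : ℝ} (hα : 0 ≤ α) :
    Tendsto (fun N : ℕ => (⌊α * N⌋ : ℝ) / N) atTop (𝓝 α) := by
  refine ((tendsto_nat_floor_mul_div_atTop hα).comp tendsto_natCast_atTop_atTop).congr fun N => ?_
  simp [natCast_floor_eq_intCast_floor (mul_nonneg hα N.cast_nonneg)]

lemma tendsto_natCeil_sub_one_mul_div {β : ℝ} (hβ : 0 < β) :
    Tendsto (fun N : ℕ => ((⌈β * N⌉₊ - 1 : ℕ) : ℝ) / N) atTop (𝓝 β) := by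
  have h := ((tendsto_nat_ceil_mul_div_atTop hβ.le).comp tendsto_natCast_atTop_atTop).sub
    (tendsto_one_div_atTop_nhds_zero_nat (𝕜 := ℝ))
  rw [sub_zero] at h
  refine h.congr' ?_
  filter_upwards [eventually_ge_atTop 1] with N hN
  have hceil : 1 ≤ ⌈β * N⌉₊ := Nat.one_le_iff_ne_zero.mpr (Nat.ceil_pos.mpr (by positivity)).ne'
  simp [Nat.cast_sub hceil, sub_div]

lemma tendsto_prob_le_rangeCount {α β : ℝ} (hα0 : 0 < α) (hα1 : α < 1) (hβ0 : 0 < β)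
    (hβ1 : β ≤ 1) :
    Tendsto (fun N : ℕ => prob N (1/2) ⌊α * (N : ℝ)⌋
        fun w => β * (N : ℝ) ≤ (rangeCount ⌊α * (N : ℝ)⌋ w : ℝ))
      atTop (𝓝 (min 1 (α / β) + min 1 ((1 - α) / β) - 1)) := by
  set b : ℕ → ℕ := fun N => ⌈β * N⌉₊ - 1
  have hx := tendsto_intFloor_mul_div hα0.le
  have hb := tendsto_natCeil_sub_one_mul_div hβ0
  have hlimit : Tendsto (fun N : ℕ => min 1 ((⌊α * N⌋ : ℝ) / b N) +
      min 1 ((N - ⌊α * N⌋ : ℝ) / b N) - 1)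
      atTop (𝓝 (min 1 (α / β) + min 1 ((1 - α) / β) - 1)) := by
    have hx' := (tendsto_const_nhds (x := (1 : ℝ))).sub hx
    refine (((tendsto_const_nhds.min (hx.div hb hβ0.ne')).add
      (tendsto_const_nhds.min (hx'.div hb hβ0.ne'))).sub_const 1).congr' ?_
    filter_upwards [eventually_gt_atTop 0] with N hN
    have : (N : ℝ) ≠ 0 := by positivity
    simp only [Pi.div_apply]
    rw [div_div_div_cancel_right₀ this, one_sub_div this, div_div_div_cancel_right₀ this]
  refine hlimit.congr' ?_
  have hαN := (tendsto_natCast_atTop_atTop.const_mul_atTop hα0).eventually_ge_atTop 1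
  have hβN := (tendsto_natCast_atTop_atTop.const_mul_atTop hβ0).eventually_gt_atTop 1
  filter_upwards [hαN, hβN] with N hαN hβN
  have hN : (0 : ℝ) < N := pos_of_mul_pos_right (by linarith) hα0.le
  have hx0 : 0 < ⌊α * N⌋ := Int.floor_pos.mpr hαN
  have hxN : ⌊α * N⌋ < N := Int.floor_lt.mpr (by push_cast; nlinarith)
  have hceil : 1 < ⌈β * N⌉₊ := Nat.lt_ceil.mpr (by simpa using hβN)
  have hbN : b N < N := by
    have : ⌈β * N⌉₊ ≤ N := Nat.ceil_le.mpr (by nlinarith)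
    simp only [b]
    omega
  have hevent : ∀ w, β * N ≤ (rangeCount ⌊α * N⌋ w : ℝ) ↔ b N + 1 ≤ rangeCount ⌊α * N⌋ w := by
    intro w
    rw [← Nat.ceil_le, Nat.sub_add_cancel hceil.le]
  simp only [hevent, prob_half_eq_toReal_symProb]
  rw [toReal_symProb_le_rangeCount hx0 hxN (by simp only [b]; omega) hbN]

/-- Proposition 1 (symmetric case): for the symmetric walk started from `⌊αN⌋`,
`P_{⌊αN⌋}(R_N ≥ βN)` converges to the tail of the limit law `G_{0,α}`. -/
theorem range_limit_symmetric (α β : ℝ) (hα0 : 0 < α) (hα1 : α < 1)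
    (hβ0 : 0 < β) (hβ1 : β ≤ 1) :
    (β ≤ min α (1 - α) →
      Tendsto (fun N : ℕ => prob N (1/2) ⌊α * (N : ℝ)⌋
          fun w => β * (N : ℝ) ≤ (rangeCount ⌊α * (N : ℝ)⌋ w : ℝ))
        atTop (𝓝 1)) ∧
    (min α (1 - α) < β ∧ β < max α (1 - α) →
      Tendsto (fun N : ℕ => prob N (1/2) ⌊α * (N : ℝ)⌋
          fun w => β * (N : ℝ) ≤ (rangeCount ⌊α * (N : ℝ)⌋ w : ℝ))
        atTop (𝓝 (min α (1 - α) / β))) ∧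
    (max α (1 - α) ≤ β →
      Tendsto (fun N : ℕ => prob N (1/2) ⌊α * (N : ℝ)⌋
          fun w => β * (N : ℝ) ≤ (rangeCount ⌊α * (N : ℝ)⌋ w : ℝ))
        atTop (𝓝 ((1 - β) / β))) := by
  have h := tendsto_prob_le_rangeCount hα0 hα1 hβ0 hβ1
  refine ⟨fun hβ => ?_, fun ⟨hlo, hhi⟩ => ?_, fun hβ => ?_⟩ <;> convert h using 2
  · rw [le_min_iff] at hβ
    rw [min_eq_left ((one_le_div hβ0).mpr hβ.1), min_eq_left ((one_le_div hβ0).mpr hβ.2)]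
    ring
  · rcases le_total α (1 - α) with hα | hα
    · rw [min_eq_left hα] at hlo ⊢
      rw [max_eq_right hα] at hhi
      rw [min_eq_right ((div_le_one hβ0).mpr hlo.le), min_eq_left ((one_le_div hβ0).mpr hhi.le)]
      ring
    · rw [min_eq_right hα] at hlo ⊢
      rw [max_eq_left hα] at hhi
      rw [min_eq_left ((one_le_div hβ0).mpr hhi.le), min_eq_right ((div_le_one hβ0).mpr hlo.le)]
      ring
  · rw [max_le_iff] at hβ
    rw [min_eq_right ((div_le_one hβ0).mpr hβ.1), min_eq_right ((div_le_one hβ0).mpr hβ.2)]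
    field_simp
    ring
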